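/- Let G be a second countable locally compact Hausdorff principal groupoid with left Haar system, and z ∈ G⁰. If for every k ≥ 1 the constant sequence {z, z, ...} converges k-times in G⁰/G to z, then for every open neighborhood V of z in G⁰, λ_z(r⁻¹(V)) = ∞. -/

import Mathlib

open MeasureTheory Filter Topology ENNReal Classical

/-- A topological groupoid, given by range/source maps, a (total) partial-multiplication
`mul` (only meaningful on composable pairs, i.e. when `s γ = r α`) and inversion. -/
structure TopGroupoid (G : Type*) [TopologicalSpace G] where
  r : G → G
  s : G → G
  mul : G → G → G
  inv : G → G
  r_mul : ∀ γ α, s γ = r α → r (mul γ α) = r γ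
  s_mul : ∀ γ α, s γ = r α → s (mul γ α) = s α
  mul_assoc' : ∀ γ α β, s γ = r α → s α = r β → mul (mul γ α) β = mul γ (mul α β)
  r_inv : ∀ γ, r (inv γ) = s γ
  s_inv : ∀ γ, s (inv γ) = r γ
  inv_inv' : ∀ γ, inv (inv γ) = γ
  mul_inv' : ∀ γ, mul γ (inv γ) = r γ
  inv_mul' : ∀ γ, mul (inv γ) γ = s γ
  unit_mul : ∀ γ, mul (r γ) γ = γ
  mul_unit : ∀ γ, mul γ (s γ) = γ
  continuous_r : Continuous r
  continuous_s : Continuous s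
  continuous_inv : Continuous inv
  continuous_mul : ContinuousOn (fun p : G × G => mul p.1 p.2) {p | s p.1 = r p.2}

namespace TopGroupoid

variable {G : Type*} [TopologicalSpace G] (Gd : TopGroupoid G)

/-- The unit space `G⁰` of the groupoid. -/
def units : Set G := Set.range Gd.r

/-- The orbit `[z] = r(s⁻¹{z})` of a unit `z`. -/
def orbit (z : G) : Set G := Gd.r '' (Gd.s ⁻¹' {z})

/-- A groupoid is principal if `γ ↦ (r γ, s γ)` is injective. -/
def Principal : Prop := Function.Injective (fun γ => (Gd.r γ, Gd.s γ))

/-- Product of two subsets of the groupoid: all products of composable pairs. -/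
def setMul (A B : Set G) : Set G :=
  {x | ∃ γ ∈ A, ∃ α ∈ B, Gd.s γ = Gd.r α ∧ x = Gd.mul γ α}

/-- Powers of a subset with respect to `setMul`; `A ^ 1 = A`. -/
def setPow (A : Set G) : ℕ → Set G
  | 0 => Gd.units
  | n+1 => Gd.setMul A (setPow A n)

/-- A set `W ⊆ G` is conditionally compact if `WV` and `VW` are relatively compact
for every compact `V ⊆ G`. -/
def CondCompact (W : Set G) : Prop :=
  ∀ V : Set G, IsCompact V →
    IsCompact (closure (Gd.setMul W V)) ∧ IsCompact (closure (Gd.setMul V W))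

/-- A sequence `x : ℕ → G` (in the unit space) converges `k`-times in `G⁰/G` to `z`. -/
def ConvergesKTimes (x : ℕ → G) (z : G) (k : ℕ) : Prop :=
  ∃ γ : Fin k → ℕ → G,
    (∀ i n, Gd.s (γ i n) = x n) ∧
    (∀ i, Tendsto (fun n => Gd.r (γ i n)) atTop (𝓝 z)) ∧
    (∀ i j : Fin k, i < j →
      Tendsto (fun n => Gd.mul (γ j n) (Gd.inv (γ i n))) atTop (cocompact G))

end TopGroupoid

/-- A left Haar system on a topological groupoid: a family of Radon measures `λˣ`
with support `r⁻¹{x}`, continuous in `x`, and left invariant. -/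
structure HaarSystem {G : Type*} [TopologicalSpace G] [MeasurableSpace G]
    (Gd : TopGroupoid G) where
  lam : G → Measure G
  regular : ∀ x, (lam x).Regular
  supp_subset : ∀ x ∈ Gd.units, lam x {γ | Gd.r γ ≠ x} = 0
  supp_full : ∀ x ∈ Gd.units, ∀ U : Set G, IsOpen U →
      (U ∩ Gd.r ⁻¹' {x}).Nonempty → 0 < lam x U
  continuous_int : ∀ f : G → ℝ, Continuous f → HasCompactSupport f →
      Continuous fun x => ∫ γ, f γ ∂(lam x)
  left_invariant : ∀ γ : G, ∀ f : G → ℝ, Continuous f → HasCompactSupport f →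
      ∫ α, f (Gd.mul γ α) ∂(lam (Gd.s γ)) = ∫ α, f α ∂(lam (Gd.r γ))

namespace HaarSystem

variable {G : Type*} [TopologicalSpace G] [MeasurableSpace G]
  {Gd : TopGroupoid G} (HS : HaarSystem Gd)

/-- The associated right Haar system `λ_x(E) = λˣ(E⁻¹)`, supported on `s⁻¹{x}`. -/
noncomputable def rlam (x : G) : Measure G := (HS.lam x).map Gd.inv

/-- The groupoid (with its Haar system) is integrable if
`sup_{x ∈ N} λˣ(s⁻¹ N) < ∞` for every compact `N ⊆ G⁰`. -/
def Integrable : Prop :=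
  ∀ N : Set G, N ⊆ Gd.units → IsCompact N →
    (⨆ x ∈ N, HS.lam x (Gd.s ⁻¹' N)) < ⊤

/-- `G` fails to be integrable at `z` if `sup_{x ∈ U} λˣ(s⁻¹ U) = ∞` for every open
neighborhood `U` of `z` in `G⁰`. -/
def FailsIntegrableAt (z : G) : Prop :=
  ∀ U : Set G, IsOpen U → z ∈ U →
    (⨆ x ∈ U ∩ Gd.units, HS.lam x (Gd.s ⁻¹' (U ∩ Gd.units))) = ⊤

end HaarSystem

/-!
Fix a bump function `f` at `z` supported in `s⁻¹ V`, so `c = ∫ f dλᶻ > 0`. Given `k` arrows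
`γ₁, …, γₖ` from `z` whose ranges are close to `z` and which are mutually far apart, left
invariance makes each translate `γᵢ⁻¹ · supp f ⊆ r⁻¹{z}` carry `λᶻ`-mass at least `c / 2`,
and since `γⱼ γᵢ⁻¹ ∉ (supp f)(supp f)⁻¹` these translates are disjoint. Hence
`λ_z(r⁻¹ V) = λᶻ(s⁻¹ V) ≥ k c / 2` for every `k`.
-/

namespace TopGroupoid

variable {G : Type*} [TopologicalSpace G] (Gd : TopGroupoid G)

lemma r_mem_units (γ : G) : Gd.r γ ∈ Gd.units := ⟨γ, rfl⟩

lemma s_mem_units (γ : G) : Gd.s γ ∈ Gd.units := ⟨Gd.inv γ, Gd.r_inv γ⟩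

lemma r_r (γ : G) : Gd.r (Gd.r γ) = Gd.r γ := by
  simpa only [Gd.mul_inv'] using Gd.r_mul γ (Gd.inv γ) (Gd.r_inv γ).symm

lemma s_r (γ : G) : Gd.s (Gd.r γ) = Gd.r γ := by
  simpa only [Gd.mul_inv', Gd.s_inv] using Gd.s_mul γ (Gd.inv γ) (Gd.r_inv γ).symm

lemma r_of_mem_units {x : G} (hx : x ∈ Gd.units) : Gd.r x = x := by
  obtain ⟨γ, rfl⟩ := hx
  exact Gd.r_r γ

lemma s_of_mem_units {x : G} (hx : x ∈ Gd.units) : Gd.s x = x := by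
  obtain ⟨γ, rfl⟩ := hx
  exact Gd.s_r γ

lemma preimage_r_inter_units (V : Set G) : Gd.r ⁻¹' (V ∩ Gd.units) = Gd.r ⁻¹' V :=
  Set.ext fun γ => and_iff_left (Gd.r_mem_units γ)

lemma eq_inv_of_mul_eq_r {p q : G} (h : Gd.s p = Gd.r q) (hm : Gd.mul p q = Gd.r p) :
    q = Gd.inv p := by
  have hassoc := Gd.mul_assoc' (Gd.inv p) p q (Gd.s_inv p) h
  rwa [hm, Gd.inv_mul', ← Gd.s_inv p, Gd.mul_unit, h, Gd.unit_mul] at hassoc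

lemma mul_inv_rev {γ α : G} (h : Gd.s γ = Gd.r α) :
    Gd.inv (Gd.mul γ α) = Gd.mul (Gd.inv α) (Gd.inv γ) := by
  have hii : Gd.s (Gd.inv α) = Gd.r (Gd.inv γ) := by rw [Gd.s_inv, Gd.r_inv, h]
  have hαi : Gd.s α = Gd.r (Gd.inv α) := (Gd.r_inv α).symm
  have hc : Gd.s α = Gd.r (Gd.mul (Gd.inv α) (Gd.inv γ)) := by
    rw [Gd.r_mul _ _ hii, Gd.r_inv]
  have hm : Gd.mul (Gd.mul γ α) (Gd.mul (Gd.inv α) (Gd.inv γ)) = Gd.r (Gd.mul γ α) := by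
    rw [Gd.mul_assoc' γ α _ h hc, ← Gd.mul_assoc' α (Gd.inv α) (Gd.inv γ) hαi hii,
      Gd.mul_inv' α, ← Gd.s_inv α, hii, Gd.unit_mul, Gd.mul_inv' γ, Gd.r_mul γ α h]
  exact (Gd.eq_inv_of_mul_eq_r (by rw [Gd.s_mul γ α h]; exact hc) hm).symm

lemma mul_mul_inv_mul_cancel_right {β δ α : G} (hβ : Gd.s β = Gd.r α)
    (hδ : Gd.s δ = Gd.r α) :
    Gd.mul (Gd.mul δ α) (Gd.inv (Gd.mul β α)) = Gd.mul δ (Gd.inv β) := by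
  have hδα : Gd.s (Gd.mul δ α) = Gd.r (Gd.inv α) := by rw [Gd.s_mul _ _ hδ, Gd.r_inv]
  have hαβ : Gd.s (Gd.inv α) = Gd.r (Gd.inv β) := by rw [Gd.s_inv, Gd.r_inv, hβ]
  rw [Gd.mul_inv_rev hβ, ← Gd.mul_assoc' _ _ _ hδα hαβ,
    Gd.mul_assoc' δ α (Gd.inv α) hδ (Gd.r_inv α).symm, Gd.mul_inv', ← hδ, Gd.mul_unit]

lemma isClosed_composable [T2Space G] : IsClosed {p : G × G | Gd.s p.1 = Gd.r p.2} :=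
  isClosed_eq (Gd.continuous_s.comp continuous_fst) (Gd.continuous_r.comp continuous_snd)

lemma isCompact_setMul [T2Space G] {A B : Set G} (hA : IsCompact A) (hB : IsCompact B) :
    IsCompact (Gd.setMul A B) := by
  have hD : IsCompact ({p : G × G | Gd.s p.1 = Gd.r p.2} ∩ A ×ˢ B) :=
    (hA.prod hB).inter_left Gd.isClosed_composable
  convert hD.image_of_continuousOn (Gd.continuous_mul.mono Set.inter_subset_left) using 1
  ext x
  simp only [setMul, Set.mem_image, Set.mem_inter_iff, Set.mem_prod, Prod.exists]
  constructor
  · rintro ⟨γ, hγ, α, hα, hγα, rfl⟩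
    exact ⟨γ, α, ⟨hγα, hγ, hα⟩, rfl⟩
  · rintro ⟨γ, α, ⟨hγα, hγ, hα⟩, rfl⟩
    exact ⟨γ, hγ, α, hα, hγα, rfl⟩

lemma continuousOn_mul_left (γ : G) : ContinuousOn (Gd.mul γ) {α | Gd.r α = Gd.s γ} :=
  Gd.continuous_mul.comp (continuous_const.prodMk continuous_id).continuousOn
    fun _ hα => hα.symm

/-- The translate `γ⁻¹ F`, as a subset of the fibre `r⁻¹ {s γ}`. -/
def mulLeftPreimage (γ : G) (F : Set G) : Set G :=
  {α | Gd.r α = Gd.s γ ∧ Gd.mul γ α ∈ F}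

lemma isClosed_mulLeftPreimage [T2Space G] (γ : G) {F : Set G} (hF : IsClosed F) :
    IsClosed (Gd.mulLeftPreimage γ F) :=
  (Gd.continuousOn_mul_left γ).preimage_isClosed_of_isClosed
    (isClosed_eq Gd.continuous_r continuous_const) hF

lemma mulLeftPreimage_subset_preimage_s (γ : G) {F U : Set G} (hF : F ⊆ Gd.s ⁻¹' U) :
    Gd.mulLeftPreimage γ F ⊆ Gd.s ⁻¹' U := by
  rintro α ⟨hα, hγα⟩
  simpa only [Set.mem_preimage, Gd.s_mul γ α hα.symm] using hF hγα

lemma disjoint_mulLeftPreimage {β δ : G} {F : Set G}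
    (hfar : Gd.mul δ (Gd.inv β) ∉ Gd.setMul F (Gd.inv '' F)) :
    Disjoint (Gd.mulLeftPreimage β F) (Gd.mulLeftPreimage δ F) := by
  refine Set.disjoint_left.2 fun α ⟨hβα, hβF⟩ ⟨hδα, hδF⟩ => hfar ?_
  rw [← Gd.mul_mul_inv_mul_cancel_right hβα.symm hδα.symm]
  refine ⟨Gd.mul δ α, hδF, Gd.inv (Gd.mul β α), ⟨_, hβF, rfl⟩, ?_, rfl⟩
  rw [Gd.s_mul _ _ hδα.symm, Gd.r_inv, Gd.s_mul _ _ hβα.symm]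

lemma pairwise_disjoint_mulLeftPreimage {ι : Type*} [LinearOrder ι] {β : ι → G} {F : Set G}
    (hfar : ∀ i j, i < j → Gd.mul (β j) (Gd.inv (β i)) ∉ Gd.setMul F (Gd.inv '' F)) :
    Pairwise fun i j => Disjoint (Gd.mulLeftPreimage (β i) F) (Gd.mulLeftPreimage (β j) F) := by
  intro i j hij
  rcases hij.lt_or_gt with h | h
  · exact Gd.disjoint_mulLeftPreimage (hfar i j h)
  · exact (Gd.disjoint_mulLeftPreimage (hfar j i h)).symm

lemma ConvergesKTimes.exists_far_apart {Gd : TopGroupoid G} {x : ℕ → G} {z : G} {k : ℕ}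
    (h : Gd.ConvergesKTimes x z k) {P : G → Prop} (hP : ∀ᶠ y in 𝓝 z, P y) {C : Set G}
    (hC : IsCompact C) :
    ∃ n, ∃ β : Fin k → G, (∀ i, Gd.s (β i) = x n) ∧ (∀ i, P (Gd.r (β i))) ∧
      ∀ i j, i < j → Gd.mul (β j) (Gd.inv (β i)) ∉ C := by
  obtain ⟨γ, hs, hr, hfar⟩ := h
  have hnear : ∀ᶠ n in atTop, ∀ i, P (Gd.r (γ i n)) :=
    eventually_all.2 fun i => hr i hP
  have hapart : ∀ᶠ n in atTop, ∀ i j, i < j → Gd.mul (γ j n) (Gd.inv (γ i n)) ∉ C :=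
    eventually_all.2 fun i => eventually_all.2 fun j =>
      eventually_imp_distrib_left.2 fun hij => hfar i j hij hC.compl_mem_cocompact
  obtain ⟨n, hn, hn'⟩ := (hnear.and hapart).exists
  exact ⟨n, fun i => γ i n, fun i => hs i n, hn, hn'⟩

end TopGroupoid

lemma MeasureTheory.card_mul_le_measure_of_pairwise_disjoint {α ι : Type*} [MeasurableSpace α]
    [Fintype ι] {μ : Measure α} {A : ι → Set α} {T : Set α} {a : ℝ≥0∞}
    (hd : Pairwise fun i j => Disjoint (A i) (A j)) (hA : ∀ i, MeasurableSet (A i))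
    (hT : ∀ i, A i ⊆ T) (ha : ∀ i, a ≤ μ (A i)) : Fintype.card ι * a ≤ μ T :=
  calc (Fintype.card ι : ℝ≥0∞) * a = ∑ _ : ι, a := by simp
    _ ≤ ∑ i, μ (A i) := Finset.sum_le_sum fun i _ => ha i
    _ = μ (⋃ i, A i) := by rw [measure_iUnion hd hA, tsum_fintype]
    _ ≤ μ T := measure_mono (Set.iUnion_subset hT)

lemma ENNReal.eq_top_of_forall_nat_mul_le {a b : ℝ≥0∞} (ha : a ≠ 0)
    (h : ∀ k : ℕ, 1 ≤ k → k * a ≤ b) : b = ⊤ := by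
  by_contra hb
  obtain ⟨k, hk⟩ := ENNReal.exists_nat_mul_gt ha hb
  rcases Nat.eq_zero_or_pos k with rfl | hk1
  · simp at hk
  · exact (h k hk1).not_gt hk

namespace HaarSystem

variable {G : Type*} [TopologicalSpace G] [MeasurableSpace G] {Gd : TopGroupoid G}
  (HS : HaarSystem Gd)

lemma rlam_preimage_r [BorelSpace G] (x : G) {E : Set G} (hE : MeasurableSet E) :
    HS.rlam x (Gd.r ⁻¹' E) = HS.lam x (Gd.s ⁻¹' E) := by
  rw [rlam, Measure.map_apply Gd.continuous_inv.measurable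
    (Gd.continuous_r.measurable hE), ← Set.preimage_comp]
  congr 2
  exact funext Gd.r_inv

lemma integral_pos [OpensMeasurableSpace G] {x : G} (hx : x ∈ Gd.units) {f : G → ℝ}
    (hf : Continuous f) (hfc : HasCompactSupport f) (hf0 : 0 ≤ f) (hfx : f x ≠ 0) :
    0 < ∫ γ, f γ ∂HS.lam x := by
  have := HS.regular x
  rw [integral_pos_iff_support_of_nonneg hf0 (hf.integrable_of_hasCompactSupport hfc)]
  exact HS.supp_full x hx _ hf.isOpen_support ⟨x, hfx, Gd.r_of_mem_units hx⟩

/-- Left invariance moves the integral over `r⁻¹{r γ}` onto the fibre `r⁻¹{s γ}`, where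
`f (γ ·)` is at most the indicator of `γ⁻¹ supp f`. -/
lemma ofReal_integral_le_lam_mulLeftPreimage (γ : G) {f : G → ℝ} (hf : Continuous f)
    (hfc : HasCompactSupport f) (hf1 : ∀ y, f y ≤ 1) :
    ENNReal.ofReal (∫ α, f α ∂HS.lam (Gd.r γ)) ≤
      HS.lam (Gd.s γ) (Gd.mulLeftPreimage γ (tsupport f)) := by
  set A := Gd.mulLeftPreimage γ (tsupport f)
  set N := {α | Gd.r α ≠ Gd.s γ}
  rw [← HS.left_invariant γ f hf hfc]
  calc ENNReal.ofReal (∫ α, f (Gd.mul γ α) ∂HS.lam (Gd.s γ))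
      ≤ HS.lam (Gd.s γ) (A ∪ N) := by
        refine integral_le_measure (fun α _ => hf1 _) fun α hα => ?_
        simp only [Set.mem_compl_iff, Set.mem_union, not_or, A, N,
          TopGroupoid.mulLeftPreimage, Set.mem_ofPred_eq, not_and, not_not] at hα
        exact (image_eq_zero_of_notMem_tsupport (hα.1 hα.2)).le
    _ ≤ HS.lam (Gd.s γ) A + HS.lam (Gd.s γ) N := measure_union_le A N
    _ = HS.lam (Gd.s γ) A := by rw [HS.supp_subset _ (Gd.s_mem_units γ), add_zero]

end HaarSystem

theorem stmt7_general {G : Type*} [TopologicalSpace G] [T2Space G] [LocallyCompactSpace G]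
    [MeasurableSpace G] [BorelSpace G]
    (Gd : TopGroupoid G) (HS : HaarSystem Gd)
    (z : G) (hz : z ∈ Gd.units)
    (hconv : ∀ k : ℕ, 1 ≤ k → Gd.ConvergesKTimes (fun _ => z) z k) :
    ∀ V : Set G, IsOpen V → z ∈ V →
      HS.rlam z (Gd.r ⁻¹' (V ∩ Gd.units)) = ⊤ := by
  intro V hV hzV
  rw [Gd.preimage_r_inter_units, HS.rlam_preimage_r z hV.measurableSet]
  obtain ⟨f, hfz, hfc, hfV, hf01⟩ := exists_continuousMap_one_of_isCompact_subset_isOpen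
    isCompact_singleton (hV.preimage Gd.continuous_s)
    (Set.singleton_subset_iff.2 (by rwa [Set.mem_preimage, Gd.s_of_mem_units hz]))
  set c := ∫ γ, f γ ∂HS.lam z
  have hc : 0 < c := HS.integral_pos hz f.continuous hfc (fun y => (hf01 y).1)
    (by simp [hfz rfl])
  refine ENNReal.eq_top_of_forall_nat_mul_le (ENNReal.ofReal_pos.2 (half_pos hc)).ne'
    fun k hk => ?_
  have hnear : ∀ᶠ y in 𝓝 z, c / 2 < ∫ γ, f γ ∂HS.lam y :=
    (HS.continuous_int f f.continuous hfc).continuousAt.eventually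
      (lt_mem_nhds (half_lt_self hc))
  obtain ⟨-, β, hβs, hβr, hfar⟩ := (hconv k hk).exists_far_apart hnear
    (Gd.isCompact_setMul hfc (hfc.image Gd.continuous_inv))
  have hmass : ∀ i,
      ENNReal.ofReal (c / 2) ≤ HS.lam z (Gd.mulLeftPreimage (β i) (tsupport f)) :=
    fun i => calc
      ENNReal.ofReal (c / 2) ≤ ENNReal.ofReal (∫ γ, f γ ∂HS.lam (Gd.r (β i))) :=
        ENNReal.ofReal_le_ofReal (hβr i).le
      _ ≤ HS.lam z (Gd.mulLeftPreimage (β i) (tsupport f)) := by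
        simpa only [hβs i] using HS.ofReal_integral_le_lam_mulLeftPreimage (β i) f.continuous
          hfc fun y => (hf01 y).2
  simpa using MeasureTheory.card_mul_le_measure_of_pairwise_disjoint
    (Gd.pairwise_disjoint_mulLeftPreimage hfar)
    (fun i => (Gd.isClosed_mulLeftPreimage (β i) (isClosed_tsupport f)).measurableSet)
    (fun i => Gd.mulLeftPreimage_subset_preimage_s (β i) hfV) hmass

/-- if the constant sequence `{z,z,...}` converges `k`-times in `G⁰/G` to `z`
for every `k ≥ 1`, then `λ_z(r⁻¹ V) = ∞` for every open neighborhood `V` of `z` in `G⁰`. -/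
theorem stmt7 {G : Type*} [TopologicalSpace G] [T2Space G] [LocallyCompactSpace G]
    [SecondCountableTopology G] [MeasurableSpace G] [BorelSpace G]
    (Gd : TopGroupoid G) (HS : HaarSystem Gd) (hpr : Gd.Principal)
    (z : G) (hz : z ∈ Gd.units)
    (hconv : ∀ k : ℕ, 1 ≤ k → Gd.ConvergesKTimes (fun _ => z) z k) :
    ∀ V : Set G, IsOpen V → z ∈ V →
      HS.rlam z (Gd.r ⁻¹' (V ∩ Gd.units)) = ⊤ :=
  stmt7_general Gd HS z hz hconv
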